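/- Let n ≥ 1 and let A be a set partition of {1,…,n}. Then the intertwining number of A equals the number of equalities along south-west to north-east antidiagonals in the upper triangle of the rank-control matrix of M(A): i(A) = E(A), where E(A) = #{(i,j) : 2 ≤ i ≤ j+1 ≤ n and r_{i,j} = r_{i−1,j+1}}. -/

import Mathlib

open Finset
open scoped Classical

noncomputable section

/-- The arcs of a set partition `A` of `{1,…,n}`: pairs `(i,j)` with `i < j`, `i` and `j` in
the same block, and no element of that block strictly between `i` and `j`. -/
noncomputable def arcs (n : ℕ) (A : Finpartition (Finset.Icc 1 n)) : Finset (ℕ × ℕ) :=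
  (Finset.Icc 1 n ×ˢ Finset.Icc 1 n).filter
    (fun p => p.1 < p.2 ∧ ∃ B ∈ A.parts, p.1 ∈ B ∧ p.2 ∈ B ∧
      ∀ k ∈ B, ¬ (p.1 < k ∧ k < p.2))

/-- The depth of a vertex `v`: the number of arcs `(i,j)` with `i < v < j`. -/
noncomputable def vertexDepth (n : ℕ) (A : Finpartition (Finset.Icc 1 n)) (v : ℕ) : ℕ :=
  ((arcs n A).filter (fun p => p.1 < v ∧ v < p.2)).card

/-- The depth of an arc `α = (u,v)`: the number of arcs `(i,j)` with `i < u < v < j`. -/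
noncomputable def arcDepth (n : ℕ) (A : Finpartition (Finset.Icc 1 n)) (α : ℕ × ℕ) : ℕ :=
  ((arcs n A).filter (fun p => p.1 < α.1 ∧ α.2 < p.2)).card

/-- The depth index `t(A) = Σ_{i=1}^m (n−i) − Σ_{v=1}^n depth(v) + Σ_{α} depth(α)`,
where `m` is the number of arcs of `A`. -/
noncomputable def depthIndex (n : ℕ) (A : Finpartition (Finset.Icc 1 n)) : ℤ :=
  (∑ i ∈ Finset.Icc 1 (arcs n A).card, ((n : ℤ) - (i : ℤ)))
    - ∑ v ∈ Finset.Icc 1 n, (vertexDepth n A v : ℤ)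
    + ∑ α ∈ arcs n A, (arcDepth n A α : ℤ)

/-- The intertwining number of `A`: the sum over all unordered pairs of distinct blocks
`{B, C}` of the number of pairs `(b,c) ∈ B × C` with no element of `B ∪ C` strictly between
them.  Since distinct blocks are disjoint, this equals the number of pairs `(x,y)` with
`x < y` lying in different blocks `B ∋ x`, `C ∋ y` such that no element of `B ∪ C` lies
strictly between `x` and `y`. -/
noncomputable def inumber (n : ℕ) (A : Finpartition (Finset.Icc 1 n)) : ℕ :=
  ((Finset.Icc 1 n ×ˢ Finset.Icc 1 n).filter
    (fun p => p.1 < p.2 ∧ ∃ B ∈ A.parts, ∃ C ∈ A.parts, B ≠ C ∧ p.1 ∈ B ∧ p.2 ∈ C ∧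
      ∀ k ∈ B ∪ C, ¬ (p.1 < k ∧ k < p.2))).card

/-- `u` and `v` lie in the same block of `A`. -/
def sameBlock (n : ℕ) (A : Finpartition (Finset.Icc 1 n)) (u v : ℕ) : Prop :=
  ∃ B ∈ A.parts, u ∈ B ∧ v ∈ B

/-- The partner of `v`: `0` if `v` is the minimum of its block, and otherwise the largest
element of the block of `v` smaller than `v`. -/
noncomputable def partner (n : ℕ) (A : Finpartition (Finset.Icc 1 n)) (v : ℕ) : ℕ :=
  ((Finset.Icc 1 n).filter (fun u => u < v ∧ sameBlock n A u v)).sup id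

/-- The partial depth index `t_v(A) = u + #{arcs (i,j) : u < i < j < v}`, where `u` is the
partner of `v`. -/
noncomputable def partialDepthIndex (n : ℕ) (A : Finpartition (Finset.Icc 1 n)) (v : ℕ) : ℕ :=
  partner n A v +
    ((arcs n A).filter (fun p => partner n A v < p.1 ∧ p.2 < v)).card

/-- The partial intertwining number `i_v(A)`: the number of `i` with `u < i < v` (where `u`
is the partner of `v`) such that `i` has no successor in its block, or the successor of `i`
in its block is greater than `v`; i.e. every element of the block of `i` larger than `i`
is larger than `v`. -/
noncomputable def partialInumber (n : ℕ) (A : Finpartition (Finset.Icc 1 n)) (v : ℕ) : ℕ :=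
  ((Finset.Icc 1 n).filter
    (fun i => partner n A v < i ∧ i < v ∧
      ∀ j, sameBlock n A i j → i < j → v < j)).card

/-- The adjacency matrix of `A`: the `n × n` rational matrix whose `(i,j)` entry is `1` if
`(i+1, j+1)` is an arc of `A` (indices shifted from `Fin n` to `{1,…,n}`) and `0` otherwise. -/
noncomputable def adjMatrix (n : ℕ) (A : Finpartition (Finset.Icc 1 n)) :
    Matrix (Fin n) (Fin n) ℚ :=
  fun i j => if ((i : ℕ) + 1, (j : ℕ) + 1) ∈ arcs n A then 1 else 0

/-- The rank-control matrix entry `r_{i,j}` of an `n × n` matrix `M`: the rank of the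
submatrix of `M` consisting of rows `{i, i+1, …, n}` and columns `{1, …, j}`
(in 1-based indexing). -/
noncomputable def rankControl (n : ℕ) (M : Matrix (Fin n) (Fin n) ℚ) (i j : ℕ) : ℕ :=
  (M.submatrix (fun k : {k : Fin n // i ≤ (k : ℕ) + 1} => (k : Fin n))
               (fun l : {l : Fin n // (l : ℕ) + 1 ≤ j} => (l : Fin n))).rank

end

/-!
Every element has at most one successor and one predecessor in its block, so each row and each
column of `M(A)` holds at most one `1`; hence `r_{i,j}` counts the arcs `(a,b)` with
`i ≤ a < b ≤ j`. Thus `r_{x+1,y-1} = r_{x,y}` exactly when no arc inside `[x,y]` starts at `x`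
or ends at `y`, which says that `x` and `y` lie in different blocks with no element of either
block strictly between them. The shift `(x,y) ↦ (x+1,y-1)` therefore matches the pairs counted
by `i(A)` with the antidiagonal equalities counted by `E(A)`.
-/

namespace Matrix

variable {m n R : Type*} [Fintype m] [Fintype n] [CommSemiring R] [StrongRankCondition R]

/-- The `1`s form an identity submatrix, and they cover every nonzero row. -/
theorem rank_of_ite_eq_card_of_unique (r : m → n → Prop) [∀ i j, Decidable (r i j)]
    (hrow : ∀ i j j', r i j → r i j' → j = j')
    (hcol : ∀ i i' j, r i j → r i' j → i = i') :
    (of fun i j => if r i j then (1 : R) else 0).rank =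
      #(univ.filter fun p : m × n => r p.1 p.2) := by
  set S := univ.filter fun p : m × n => r p.1 p.2
  set M : Matrix m n R := of fun i j => if r i j then 1 else 0
  apply le_antisymm
  · calc M.rank ≤ #(S.image Prod.fst) := M.rank_le_card_of_support_subset _ fun i hi => by
          obtain ⟨j, hj⟩ := Function.ne_iff.mp hi
          by_cases hij : r i j
          · simpa [S] using ⟨j, hij⟩
          · simp [M, hij] at hj
      _ = #S := card_image_of_injOn fun p hp q hq hpq =>
          Prod.ext hpq (hrow _ _ _ (by simpa [S] using hp) (by simpa [S, hpq] using hq))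
  · have hone : M.submatrix (fun p : S => p.1.1) (fun p : S => p.1.2) = 1 := by
      ext p q
      by_cases hpq : p = q
      · have hp := (mem_filter.mp p.2).2
        subst hpq
        simp [M, hp]
      · have hp := (mem_filter.mp p.2).2
        have hq := (mem_filter.mp q.2).2
        have : ¬ r p.1.1 q.1.2 := fun h =>
          hpq (Subtype.ext (Prod.ext (hcol _ _ _ (hrow _ _ _ hp h ▸ hp) hq) (hrow _ _ _ hp h)))
        simp [M, this, hpq]
    calc #S = (1 : Matrix S S R).rank := by rw [rank_one, Fintype.card_coe]
      _ ≤ M.rank := hone ▸ M.rank_submatrix_le _ _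

end Matrix

section Arcs

variable {n : ℕ} {A : Finpartition (Finset.Icc 1 n)}

theorem mem_arcs {p : ℕ × ℕ} :
    p ∈ arcs n A ↔ p.1 ∈ Icc 1 n ∧ p.2 ∈ Icc 1 n ∧ p.1 < p.2 ∧
      ∃ B ∈ A.parts, p.1 ∈ B ∧ p.2 ∈ B ∧ ∀ k ∈ B, ¬ (p.1 < k ∧ k < p.2) := by
  simp only [arcs, mem_filter, mem_product, and_assoc]

theorem bounds_of_mem_arcs {p : ℕ × ℕ} (hp : p ∈ arcs n A) :
    1 ≤ p.1 ∧ p.1 < p.2 ∧ p.2 ≤ n := by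
  obtain ⟨h1, h2, h12, -⟩ := mem_arcs.mp hp
  rw [mem_Icc] at h1 h2
  omega

theorem fst_eq_of_mem_arcs {a a' b : ℕ} (h : (a, b) ∈ arcs n A)
    (h' : (a', b) ∈ arcs n A) : a = a' := by
  obtain ⟨-, -, hab, B, hB, haB, hbB, hgap⟩ := mem_arcs.mp h
  obtain ⟨-, -, hab', B', hB', haB', hbB', hgap'⟩ := mem_arcs.mp h'
  obtain rfl := A.eq_of_mem_parts hB hB' hbB hbB'
  by_contra hne
  rcases Nat.lt_or_gt_of_ne hne with hlt | hlt
  exacts [hgap a' haB' ⟨hlt, hab'⟩, hgap' a haB ⟨hlt, hab⟩]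

theorem snd_eq_of_mem_arcs {a b b' : ℕ} (h : (a, b) ∈ arcs n A)
    (h' : (a, b') ∈ arcs n A) : b = b' := by
  obtain ⟨-, -, hab, B, hB, haB, hbB, hgap⟩ := mem_arcs.mp h
  obtain ⟨-, -, hab', B', hB', haB', hbB', hgap'⟩ := mem_arcs.mp h'
  obtain rfl := A.eq_of_mem_parts hB hB' haB haB'
  by_contra hne
  rcases Nat.lt_or_gt_of_ne hne with hlt | hlt
  exacts [hgap' b hbB ⟨hab, hlt⟩, hgap b' hbB' ⟨hab', hlt⟩]

theorem exists_arc_le_of_lt {B : Finset ℕ} (hB : B ∈ A.parts) {u v : ℕ} (hu : u ∈ B)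
    (hv : v ∈ B) (huv : u < v) : ∃ b ≤ v, (u, b) ∈ arcs n A := by
  have hvT : v ∈ B.filter (u < ·) := mem_filter.mpr ⟨hv, huv⟩
  obtain ⟨b, hbT, hmin⟩ := (B.filter (u < ·)).exists_min_image id ⟨v, hvT⟩
  obtain ⟨hb, hub⟩ := mem_filter.mp hbT
  refine ⟨b, hmin v hvT, mem_arcs.mpr ⟨A.le hB hu, A.le hB hb, hub, B, hB, hu, hb, ?_⟩⟩
  exact fun k hk ⟨huk, hkb⟩ => (hmin k (mem_filter.mpr ⟨hk, huk⟩)).not_gt hkb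

theorem exists_arc_ge_of_lt {B : Finset ℕ} (hB : B ∈ A.parts) {u v : ℕ} (hu : u ∈ B)
    (hv : v ∈ B) (huv : u < v) : ∃ a ≥ u, (a, v) ∈ arcs n A := by
  have huT : u ∈ B.filter (· < v) := mem_filter.mpr ⟨hu, huv⟩
  obtain ⟨a, haT, hmax⟩ := (B.filter (· < v)).exists_max_image id ⟨u, huT⟩
  obtain ⟨ha, hav⟩ := mem_filter.mp haT
  refine ⟨a, hmax u huT, mem_arcs.mpr ⟨A.le hB ha, A.le hB hv, hav, B, hB, ha, hv, ?_⟩⟩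
  exact fun k hk ⟨hak, hkv⟩ => (hmax k (mem_filter.mpr ⟨hk, hkv⟩)).not_gt hak

theorem separated_blocks_iff {x y : ℕ} (hx : x ∈ Icc 1 n) (hy : y ∈ Icc 1 n) (hxy : x < y) :
    (∃ B ∈ A.parts, ∃ C ∈ A.parts, B ≠ C ∧ x ∈ B ∧ y ∈ C ∧ ∀ k ∈ B ∪ C, ¬ (x < k ∧ k < y)) ↔
      ∀ q ∈ arcs n A, x ≤ q.1 → q.2 ≤ y → x < q.1 ∧ q.2 < y := by
  constructor
  · rintro ⟨B, hB, C, hC, hBC, hxB, hyC, hgap⟩ q hq hxq hqy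
    obtain ⟨-, -, hq12, D, hD, hq1, hq2, -⟩ := mem_arcs.mp hq
    have hBD (h : q.1 = x) : B = D := A.eq_of_mem_parts hB hD hxB (h ▸ hq1)
    have hCD (h : q.2 = y) : C = D := A.eq_of_mem_parts hC hD hyC (h ▸ hq2)
    by_contra hend
    rcases Nat.eq_or_lt_of_le hxq with h1 | h1 <;> rcases Nat.eq_or_lt_of_le hqy with h2 | h2
    · exact hBC ((hBD h1.symm).trans (hCD h2).symm)
    · exact hgap q.2 (mem_union_left _ (hBD h1.symm ▸ hq2)) ⟨by omega, h2⟩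
    · exact hgap q.1 (mem_union_right _ (hCD h2 ▸ hq1)) ⟨h1, by omega⟩
    · exact hend ⟨h1, h2⟩
  · intro hinner
    obtain ⟨B, hB, hxB⟩ := A.exists_mem hx
    obtain ⟨C, hC, hyC⟩ := A.exists_mem hy
    refine ⟨B, hB, C, hC, ?_, hxB, hyC, ?_⟩
    · rintro rfl
      obtain ⟨b, hby, hxb⟩ := exists_arc_le_of_lt hB hxB hyC hxy
      exact (hinner _ hxb le_rfl hby).1.false
    · rintro k hk ⟨hxk, hky⟩
      rcases mem_union.mp hk with hkB | hkC
      · obtain ⟨b, hbk, hxb⟩ := exists_arc_le_of_lt hB hxB hkB hxk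
        exact (hinner _ hxb le_rfl (by omega)).1.false
      · obtain ⟨a, hka, hay⟩ := exists_arc_ge_of_lt hC hkC hyC hky
        exact (hinner _ hay (by omega) le_rfl).2.false

end Arcs

section RankControl

variable {n : ℕ} {A : Finpartition (Finset.Icc 1 n)}

theorem rankControl_adjMatrix (i j : ℕ) :
    rankControl n (adjMatrix n A) i j = #((arcs n A).filter fun p => i ≤ p.1 ∧ p.2 ≤ j) := by
  let r (k : {k : Fin n // i ≤ (k : ℕ) + 1}) (l : {l : Fin n // (l : ℕ) + 1 ≤ j}) : Prop :=
    (((k : Fin n) : ℕ) + 1, ((l : Fin n) : ℕ) + 1) ∈ arcs n A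
  have hM : (adjMatrix n A).submatrix (fun k : {k : Fin n // i ≤ (k : ℕ) + 1} => (k : Fin n))
      (fun l : {l : Fin n // (l : ℕ) + 1 ≤ j} => (l : Fin n)) =
      Matrix.of fun k l => if r k l then (1 : ℚ) else 0 := rfl
  rw [rankControl, hM, Matrix.rank_of_ite_eq_card_of_unique r
    (fun _ _ _ h h' => Subtype.ext (Fin.ext (by have := snd_eq_of_mem_arcs h h'; omega)))
    (fun _ _ _ h h' => Subtype.ext (Fin.ext (by have := fst_eq_of_mem_arcs h h'; omega)))]
  refine card_nbij (fun kl => (((kl.1 : Fin n) : ℕ) + 1, ((kl.2 : Fin n) : ℕ) + 1)) ?_ ?_ ?_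
  · rintro ⟨k, l⟩ hkl
    exact mem_filter.mpr ⟨(mem_filter.mp hkl).2, k.2, l.2⟩
  · rintro ⟨k, l⟩ - ⟨k', l'⟩ - h
    simp only [Prod.mk.injEq, Nat.add_right_cancel_iff, Fin.val_inj, Subtype.val_inj] at h
    rw [h.1, h.2]
  · rintro ⟨a, b⟩ hab
    obtain ⟨harc, hia, hbj⟩ := mem_filter.mp hab
    obtain ⟨ha, hlt, hb⟩ := bounds_of_mem_arcs harc
    refine ⟨(⟨⟨a - 1, by omega⟩, by simp; omega⟩, ⟨⟨b - 1, by omega⟩, by simp; omega⟩),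
      ?_, ?_⟩
    · simpa [r, Nat.sub_add_cancel ha, Nat.sub_add_cancel (ha.trans hlt.le)] using harc
    · simp only [Prod.mk.injEq]; omega

theorem rankControl_succ_eq_iff (x y : ℕ) :
    rankControl n (adjMatrix n A) (x + 1) y = rankControl n (adjMatrix n A) x (y + 1) ↔
      ∀ q ∈ arcs n A, x ≤ q.1 → q.2 ≤ y + 1 → x < q.1 ∧ q.2 < y + 1 := by
  have hsub : ((arcs n A).filter fun p => x ≤ p.1 ∧ p.2 ≤ y + 1).filter
      (fun p => x + 1 ≤ p.1 ∧ p.2 ≤ y) =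
        (arcs n A).filter fun p => x + 1 ≤ p.1 ∧ p.2 ≤ y := by
    rw [filter_filter]
    exact filter_congr fun p _ => by omega
  rw [rankControl_adjMatrix, rankControl_adjMatrix, ← hsub, card_filter_eq_iff]
  simp only [mem_filter, and_imp]
  exact forall₂_congr fun q _ => by omega

end RankControl

theorem inumber_eq_E_general (n : ℕ) (A : Finpartition (Finset.Icc 1 n)) :
    inumber n A =
      ((Finset.Icc 2 n ×ˢ Finset.Icc 1 n).filter
        (fun p => p.1 ≤ p.2 + 1 ∧ p.2 + 1 ≤ n ∧
          rankControl n (adjMatrix n A) p.1 p.2 =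
            rankControl n (adjMatrix n A) (p.1 - 1) (p.2 + 1))).card := by
  rw [inumber]
  refine card_nbij' (fun p => (p.1 + 1, p.2 - 1)) (fun p => (p.1 - 1, p.2 + 1)) ?_ ?_ ?_ ?_
  · rintro ⟨x, y⟩ hxy
    simp only [coe_filter, Set.mem_ofPred_eq, mem_product, mem_Icc] at hxy ⊢
    obtain ⟨⟨hx, hy⟩, hlt, hsep⟩ := hxy
    obtain ⟨y, rfl⟩ : ∃ y', y = y' + 1 := ⟨y - 1, by omega⟩
    rw [separated_blocks_iff (mem_Icc.mpr hx) (mem_Icc.mpr hy) hlt,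
      ← rankControl_succ_eq_iff] at hsep
    simp only [Nat.add_sub_cancel, hsep, and_true]
    omega
  · rintro ⟨i, j⟩ hij
    simp only [coe_filter, Set.mem_ofPred_eq, mem_product, mem_Icc] at hij ⊢
    obtain ⟨⟨hi, hj⟩, hij, hjn, hrank⟩ := hij
    obtain ⟨x, rfl⟩ : ∃ x, i = x + 1 := ⟨i - 1, by omega⟩
    rw [Nat.add_sub_cancel, rankControl_succ_eq_iff, ← separated_blocks_iff (by simp; omega)
      (by simp; omega) (by omega)] at hrank
    simp only [Nat.add_sub_cancel, hrank, and_true]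
    omega
  all_goals
    rintro ⟨a, b⟩ hab
    simp only [coe_filter, Set.mem_ofPred_eq, mem_product, mem_Icc, Prod.mk.injEq] at hab ⊢
    omega

/-- For `n ≥ 1` and a set partition `A` of `{1,…,n}`, the intertwining
number of `A` equals the number of equalities along south-west to north-east antidiagonals
in the upper triangle of the rank-control matrix of `M(A)`:
`i(A) = E(A) = #{(i,j) : 2 ≤ i ≤ j+1 ≤ n and r_{i,j} = r_{i−1,j+1}}`. -/
theorem inumber_eq_E (n : ℕ) (hn : 1 ≤ n) (A : Finpartition (Finset.Icc 1 n)) :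
    inumber n A =
      ((Finset.Icc 2 n ×ˢ Finset.Icc 1 n).filter
        (fun p => p.1 ≤ p.2 + 1 ∧ p.2 + 1 ≤ n ∧
          rankControl n (adjMatrix n A) p.1 p.2 =
            rankControl n (adjMatrix n A) (p.1 - 1) (p.2 + 1))).card :=
  inumber_eq_E_general n A
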